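/- Let A be a maximal monotone operator on a real Hilbert space H with F = A⁻¹(0) nonempty, let λ_n ∈ (0,1), y₀, u ∈ H, e_n ∈ H with λ_n → 1 and (1 − λ_n)e_n → 0, and β_n → ∞. Then the sequence x_{n+1} = (I + β_n A)⁻¹(λ_n u + (1 − λ_n)(y₀ + e_n)) converges strongly to P_F u. -/

import Mathlib

open scoped RealInnerProductSpace
open Filter

variable {H : Type*} [NormedAddCommGroup H] [InnerProductSpace ℝ H] [CompleteSpace H]

/-- A (possibly set-valued) operator `A : H → Set H` is monotone. -/
def IsMonotoneOp (A : H → Set H) : Prop :=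
  ∀ x₁ y₁ x₂ y₂, y₁ ∈ A x₁ → y₂ ∈ A x₂ → 0 ≤ ⟪x₁ - x₂, y₁ - y₂⟫

/-- `A` is maximal monotone: it is monotone and any pair `[x, y]` monotonically
related to the whole graph of `A` already belongs to the graph of `A`. -/
def IsMaximalMonotone (A : H → Set H) : Prop :=
  IsMonotoneOp A ∧ ∀ x y, (∀ v w, w ∈ A v → 0 ≤ ⟪v - x, w - y⟫) → y ∈ A x

/-- `J` is the resolvent `(I + βA)⁻¹` of `A`: for every `y`, `J y` satisfies
`(y - J y)/β ∈ A (J y)`, i.e. `y ∈ (I + βA)(J y)`. -/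
def IsResolvent (A : H → Set H) (β : ℝ) (J : H → H) : Prop :=
  ∀ y, β⁻¹ • (y - J y) ∈ A (J y)

/-- `p` is the metric projection of `u` onto the set `F`. -/
def IsProjection (F : Set H) (u p : H) : Prop :=
  p ∈ F ∧ ∀ q ∈ F, ‖u - p‖ ≤ ‖u - q‖

/-! Since resolvents are nonexpansive and the anchors `λₙ u + (1 - λₙ)(y₀ + eₙ)` tend to `u`, it
suffices that `J_{βₙ} u → P_F u`. For `β ≤ γ` monotonicity gives
`‖J_β u - J_γ u‖² ≤ ‖u - J_γ u‖² - ‖u - J_β u‖²`, and `‖u - J_β u‖ ≤ ‖u - P_F u‖`, so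
`(J_{βₙ} u)` is Cauchy. Its limit `w` is a zero of `A` by maximality; passing to the limit in
`⟪J_β u - P_F u, u - J_β u⟫ ≥ 0` gives `⟪w - P_F u, u - w⟫ ≥ 0`, which together with
`‖u - P_F u‖ ≤ ‖u - w‖` forces `w = P_F u`. -/

section Resolvent

variable {E : Type*} [NormedAddCommGroup E] [InnerProductSpace ℝ E]
  {A : E → Set E} {β β₁ β₂ : ℝ} {J J₁ J₂ : E → E}

theorem eq_of_inner_nonneg_of_norm_le {u w p : E} (hinner : 0 ≤ ⟪w - p, u - w⟫)
    (hle : ‖u - p‖ ≤ ‖u - w‖) : w = p := by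
  have hsq : ‖u - p‖ ^ 2 = ‖u - w‖ ^ 2 + 2 * ⟪w - p, u - w⟫ + ‖w - p‖ ^ 2 := by
    rw [show u - p = (u - w) + (w - p) by abel, norm_add_sq_real, real_inner_comm]
  rw [← sub_eq_zero, ← norm_eq_zero]
  nlinarith [norm_nonneg (u - p), norm_nonneg (w - p)]

namespace IsResolvent

theorem inner_sub_nonneg_of_zero (hJ : IsResolvent A β J) (hA : IsMonotoneOp A) (hβ : 0 < β)
    {q : E} (hq : (0 : E) ∈ A q) (y : E) : 0 ≤ ⟪J y - q, y - J y⟫ := by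
  have h := hA (J y) (β⁻¹ • (y - J y)) q 0 (hJ y) hq
  rw [sub_zero, real_inner_smul_right] at h
  exact nonneg_of_mul_nonneg_right h (inv_pos.mpr hβ)

theorem norm_sub_self_le_of_zero (hJ : IsResolvent A β J) (hA : IsMonotoneOp A) (hβ : 0 < β)
    {q : E} (hq : (0 : E) ∈ A q) (y : E) : ‖y - J y‖ ≤ ‖y - q‖ := by
  have hsq : ‖y - J y‖ ^ 2 ≤ ⟪y - q, y - J y⟫ := by
    have hsplit : y - q = (y - J y) + (J y - q) := by abel
    rw [hsplit, inner_add_left, real_inner_self_eq_norm_sq]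
    linarith [hJ.inner_sub_nonneg_of_zero hA hβ hq y]
  have hcs := real_inner_le_norm (y - q) (y - J y)
  nlinarith [norm_nonneg (y - J y), norm_nonneg (y - q)]

theorem norm_sub_le (hJ : IsResolvent A β J) (hA : IsMonotoneOp A) (hβ : 0 < β) (a b : E) :
    ‖J a - J b‖ ≤ ‖a - b‖ := by
  have h := hA (J a) (β⁻¹ • (a - J a)) (J b) (β⁻¹ • (b - J b)) (hJ a) (hJ b)
  rw [← smul_sub, real_inner_smul_right] at h
  have hfirm : 0 ≤ ⟪J a - J b, (a - b) - (J a - J b)⟫ := by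
    have hsplit : (a - b) - (J a - J b) = (a - J a) - (b - J b) := by abel
    rw [hsplit]
    exact nonneg_of_mul_nonneg_right h (inv_pos.mpr hβ)
  rw [inner_sub_right, real_inner_self_eq_norm_sq] at hfirm
  have hcs := real_inner_le_norm (J a - J b) (a - b)
  nlinarith [norm_nonneg (J a - J b), norm_nonneg (a - b)]

theorem inner_sub_nonneg_of_le (hJ₁ : IsResolvent A β₁ J₁) (hJ₂ : IsResolvent A β₂ J₂)
    (hA : IsMonotoneOp A) (hβ₁ : 0 < β₁) (hβ : β₁ ≤ β₂) (u : E) :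
    0 ≤ ⟪u - J₁ u, J₁ u - J₂ u⟫ := by
  have h := hA (J₁ u) (β₁⁻¹ • (u - J₁ u)) (J₂ u) (β₂⁻¹ • (u - J₂ u)) (hJ₁ u) (hJ₂ u)
  have hsplit : β₁⁻¹ • (u - J₁ u) - β₂⁻¹ • (u - J₂ u)
      = (β₁⁻¹ - β₂⁻¹) • (u - J₁ u) - β₂⁻¹ • (J₁ u - J₂ u) := by module
  rw [hsplit, inner_sub_right, real_inner_smul_right, real_inner_smul_right,
    real_inner_self_eq_norm_sq, real_inner_comm] at h
  have hinv : β₂⁻¹ ≤ β₁⁻¹ := inv_anti₀ hβ₁ hβ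
  have hβ₂ : 0 < β₂⁻¹ := inv_pos.mpr (hβ₁.trans_le hβ)
  rcases hinv.lt_or_eq with hlt | heq
  · nlinarith [sq_nonneg ‖J₁ u - J₂ u‖]
  · rw [heq, sub_self, zero_mul, zero_sub, neg_nonneg] at h
    have hzero : ‖J₁ u - J₂ u‖ ^ 2 = 0 :=
      le_antisymm (nonpos_of_mul_nonpos_right h (inv_pos.mpr hβ₁)) (sq_nonneg _)
    rw [sq_eq_zero_iff, norm_eq_zero] at hzero
    rw [hzero, inner_zero_right]

theorem sq_norm_sub_le_of_le (hJ₁ : IsResolvent A β₁ J₁) (hJ₂ : IsResolvent A β₂ J₂)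
    (hA : IsMonotoneOp A) (hβ₁ : 0 < β₁) (hβ : β₁ ≤ β₂) (u : E) :
    ‖J₁ u - J₂ u‖ ^ 2 ≤ ‖u - J₂ u‖ ^ 2 - ‖u - J₁ u‖ ^ 2 := by
  have hsplit : u - J₂ u = (u - J₁ u) + (J₁ u - J₂ u) := by abel
  rw [hsplit, norm_add_sq_real]
  linarith [hJ₁.inner_sub_nonneg_of_le hJ₂ hA hβ₁ hβ u]

end IsResolvent

theorem mem_zero_of_tendsto_resolvent {ι : Type*} {l : Filter ι} [l.NeBot] {β : ι → ℝ}
    {J : ι → E → E} (hA : IsMaximalMonotone A) (hJ : ∀ i, IsResolvent A (β i) (J i))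
    (hβ : Tendsto β l atTop) {u w : E} (hw : Tendsto (fun i => J i u) l (nhds w)) :
    (0 : E) ∈ A w := by
  refine hA.2 w 0 fun v z hz => ?_
  have hgraph : Tendsto (fun i => (β i)⁻¹ • (u - J i u)) l (nhds 0) := by
    simpa using hβ.inv_tendsto_atTop.smul (tendsto_const_nhds.sub hw)
  have hlim : Tendsto (fun i => ⟪v - J i u, z - (β i)⁻¹ • (u - J i u)⟫) l
      (nhds ⟪v - w, z - 0⟫) :=
    (tendsto_const_nhds.sub hw).inner (tendsto_const_nhds.sub hgraph)
  simpa using ge_of_tendsto' hlim fun i => hA.1 v z (J i u) _ hz (hJ i u)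

end Resolvent

theorem cauchySeq_of_sq_dist_le_sub {α : Type*} [PseudoMetricSpace α] {f : ℕ → α}
    {r β : ℕ → ℝ} (hr : BddAbove (Set.range r)) (hβ : Tendsto β atTop atTop)
    (hf : ∀ m n, β m ≤ β n → dist (f m) (f n) ^ 2 ≤ r n - r m) : CauchySeq f := by
  rw [Metric.cauchySeq_iff]
  intro ε hε
  obtain ⟨N, hN⟩ :=
    exists_lt_of_lt_ciSup (sub_lt_self (⨆ n, r n) (by positivity : 0 < ε ^ 2 / 4))
  obtain ⟨M, hM⟩ := eventually_atTop.mp (hβ.eventually_ge_atTop (β N))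
  have hclose : ∀ m ≥ M, dist (f N) (f m) < ε / 2 := fun m hm =>
    lt_of_pow_lt_pow_left₀ 2 (by positivity) <| calc
      dist (f N) (f m) ^ 2 ≤ r m - r N := hf N m (hM m hm)
      _ ≤ (⨆ n, r n) - r N := by gcongr; exact le_ciSup hr m
      _ < (ε / 2) ^ 2 := by linarith
  refine ⟨M, fun m hm n hn => ?_⟩
  linarith [dist_triangle_left (f m) (f n) (f N), hclose m hm, hclose n hn]

theorem tendsto_resolvent_apply_atTop {A : H → Set H} {β : ℕ → ℝ} {J : ℕ → H → H}
    (hA : IsMaximalMonotone A) (hβpos : ∀ n, 0 < β n) (hβ : Tendsto β atTop atTop)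
    (hJ : ∀ n, IsResolvent A (β n) (J n)) {u p : H} (hp : IsProjection {x | (0 : H) ∈ A x} u p) :
    Tendsto (fun n => J n u) atTop (nhds p) := by
  have hbdd : BddAbove (Set.range fun n => ‖u - J n u‖ ^ 2) := by
    refine ⟨‖u - p‖ ^ 2, ?_⟩
    rintro _ ⟨n, rfl⟩
    dsimp only
    gcongr
    exact (hJ n).norm_sub_self_le_of_zero hA.1 (hβpos n) hp.1 u
  have hcauchy : CauchySeq fun n => J n u :=
    cauchySeq_of_sq_dist_le_sub hbdd hβ fun m n hmn => by
      rw [dist_eq_norm]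
      exact (hJ m).sq_norm_sub_le_of_le (hJ n) hA.1 (hβpos m) hmn u
  obtain ⟨w, hw⟩ := cauchySeq_tendsto_of_complete hcauchy
  have hwA : (0 : H) ∈ A w := mem_zero_of_tendsto_resolvent hA hJ hβ hw
  have hinner : 0 ≤ ⟪w - p, u - w⟫ :=
    ge_of_tendsto' ((hw.sub tendsto_const_nhds).inner (tendsto_const_nhds.sub hw))
      fun n => (hJ n).inner_sub_nonneg_of_zero hA.1 (hβpos n) hp.1 u
  rwa [← eq_of_inner_nonneg_of_norm_le hinner (hp.2 w hwA)]

theorem stmt_16_general (A : H → Set H) (hA : IsMaximalMonotone A)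
    (F : Set H) (hF : F = {x | (0 : H) ∈ A x})
    (lam : ℕ → ℝ)
    (hlam1 : Tendsto lam atTop (nhds 1))
    (y₀ u : H) (e : ℕ → H)
    (he : Tendsto (fun n => (1 - lam n) • e n) atTop (nhds (0 : H)))
    (β : ℕ → ℝ) (hβpos : ∀ n, 0 < β n) (hβ : Tendsto β atTop atTop)
    (J : ℕ → H → H) (hJ : ∀ n, IsResolvent A (β n) (J n))
    (x : ℕ → H) (hx : ∀ n, x (n + 1) = J n (lam n • u + (1 - lam n) • (y₀ + e n)))
    (p : H) (hp : IsProjection F u p) :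
    Tendsto x atTop (nhds p) := by
  subst hF
  have hJu := tendsto_resolvent_apply_atTop hA hβpos hβ hJ hp
  have hanchor : Tendsto (fun n => lam n • u + (1 - lam n) • (y₀ + e n)) atTop (nhds u) := by
    have hsplit : ∀ n, lam n • u + (1 - lam n) • (y₀ + e n)
        = u + ((1 - lam n) • (y₀ - u) + (1 - lam n) • e n) := fun n => by module
    have hcoef : Tendsto (fun n => 1 - lam n) atTop (nhds 0) := by
      simpa using hlam1.const_sub 1
    convert tendsto_const_nhds.add ((hcoef.smul_const (y₀ - u)).add he) using 1
    · exact funext hsplit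
    · simp
  refine (tendsto_add_atTop_iff_nat 1).mp (tendsto_of_tendsto_of_dist hJu ?_)
  refine squeeze_zero (fun n => dist_nonneg) (fun n => ?_)
    (tendsto_iff_dist_tendsto_zero.mp hanchor)
  rw [dist_comm, hx, dist_eq_norm, dist_eq_norm]
  exact (hJ n).norm_sub_le hA.1 (hβpos n) _ u

/-- Second Djafari Rouhani–Moradi algorithm: the sequence
`x_{n+1} = (I + β_n A)⁻¹(λ_n u + (1-λ_n)(y₀ + e_n))` converges strongly to `P_F u`. -/
theorem stmt_16 (A : H → Set H) (hA : IsMaximalMonotone A)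
    (F : Set H) (hF : F = {x | (0 : H) ∈ A x}) (hne : F.Nonempty)
    (lam : ℕ → ℝ) (hlam : ∀ n, lam n ∈ Set.Ioo (0 : ℝ) 1)
    (hlam1 : Tendsto lam atTop (nhds 1))
    (y₀ u : H) (e : ℕ → H)
    (he : Tendsto (fun n => (1 - lam n) • e n) atTop (nhds (0 : H)))
    (β : ℕ → ℝ) (hβpos : ∀ n, 0 < β n) (hβ : Tendsto β atTop atTop)
    (J : ℕ → H → H) (hJ : ∀ n, IsResolvent A (β n) (J n))
    (x : ℕ → H) (hx : ∀ n, x (n + 1) = J n (lam n • u + (1 - lam n) • (y₀ + e n)))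
    (p : H) (hp : IsProjection F u p) :
    Tendsto x atTop (nhds p) :=
  stmt_16_general A hA F hF lam hlam1 y₀ u e he β hβpos hβ J hJ x hx p hp
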